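/- arXiv:2511.01065 — 2 statements merged into one kernel-verified Lean document; each statement's English description precedes it below -/
import Mathlib

section
/- Let P ⊆ ℝ^d be a finite nonempty set, 0 < ε < α, and let c be an α-centerpoint of P. Then c is ε-robustly representative of P: for every finite set P' with |P' ∩ P| > (1−ε)|P|, we have max_{y∈P'} dist(c,y) ≤ diam(P'). -/
/-!
For `y ≠ c`, the closed halfspace through `c` facing away from `y` contains at least `α|P|`
points of `P` by depth, while fewer than `ε|P| < α|P|` points of `P` are missing from `P'`.
So some `p ∈ P'` lies in that halfspace, and then the angle at `c` in the triangle `y c p` is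
not acute, whence `dist c y ≤ dist p y ≤ diam P'`.
-/

open scoped Classical

open Finset RealInnerProductSpace

theorem dist_le_dist_of_inner_nonneg {E : Type*} [NormedAddCommGroup E] [InnerProductSpace ℝ E]
    {c y p : E} (h : 0 ≤ ⟪p - c, c - y⟫) : dist c y ≤ dist p y := by
  rw [dist_eq_norm, dist_eq_norm]
  refine le_of_sq_le_sq ?_ (norm_nonneg _)
  rw [← sub_add_sub_cancel p c y, norm_add_sq_real]
  nlinarith [sq_nonneg ‖p - c‖]

theorem Finset.exists_mem_filter_of_card_sdiff_lt {α : Type*} [DecidableEq α] {s t : Finset α}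
    {q : α → Prop} [DecidablePred q] (h : #(s \ t) < #(s.filter q)) : ∃ x ∈ t, x ∈ s ∧ q x := by
  by_contra! hnone
  refine (card_le_card fun x hx => ?_).not_gt h
  obtain ⟨hxs, hqx⟩ := mem_filter.mp hx
  exact mem_sdiff.mpr ⟨hxs, fun hxt => hnone x hxt hxs hqx⟩

theorem stmt_8_general {d : ℕ} (P : Finset (EuclideanSpace ℝ (Fin d))) (hP : P.Nonempty)
    (α ε : ℝ) (hεα : ε < α)
    (c : EuclideanSpace ℝ (Fin d))
    (hcenter : ∀ (f : EuclideanSpace ℝ (Fin d) →L[ℝ] ℝ) (a : ℝ), f ≠ 0 →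
      a ≤ f c → (⌈α * P.card⌉ : ℤ) ≤ (P.filter (fun p => a ≤ f p)).card)
    (P' : Finset (EuclideanSpace ℝ (Fin d)))
    (hcard : ((P' ∩ P).card : ℝ) > (1 - ε) * P.card) :
    ∀ y ∈ P', dist c y ≤ Metric.diam (P' : Set (EuclideanSpace ℝ (Fin d))) := by
  intro y hy
  rcases eq_or_ne c y with rfl | hcy
  · simpa using Metric.diam_nonneg
  set f := innerSL ℝ (c - y)
  have hf : f ≠ 0 := by
    rw [← norm_ne_zero_iff, innerSL_apply_norm, norm_ne_zero_iff]
    exact sub_ne_zero.mpr hcy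
  have hdeep : ε * #P < #(P.filter fun p => f c ≤ f p) := by
    have hpos : (0 : ℝ) < #P := by exact_mod_cast hP.card_pos
    calc ε * #P < α * #P := by gcongr
      _ ≤ (⌈α * #P⌉ : ℤ) := Int.le_ceil _
      _ ≤ #(P.filter fun p => f c ≤ f p) := by exact_mod_cast hcenter f (f c) hf le_rfl
  have hout : (#(P \ P') : ℝ) < ε * #P := by
    have := card_sdiff_add_card_inter P P'
    rw [inter_comm] at this
    rw [← this] at hcard ⊢
    push_cast at hcard ⊢
    linarith
  obtain ⟨p, hp', -, hfp⟩ := exists_mem_filter_of_card_sdiff_lt (by exact_mod_cast hout.trans hdeep)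
  have hinner : 0 ≤ ⟪p - c, c - y⟫ := by
    rw [real_inner_comm, inner_sub_right]
    exact sub_nonneg.mpr hfp
  calc dist c y ≤ dist p y := dist_le_dist_of_inner_nonneg hinner
    _ = dist y p := dist_comm p y
    _ ≤ Metric.diam (P' : Set (EuclideanSpace ℝ (Fin d))) :=
      Metric.dist_le_diam_of_mem P'.finite_toSet.isBounded hy hp'

theorem stmt_8 {d : ℕ} (P : Finset (EuclideanSpace ℝ (Fin d))) (hP : P.Nonempty)
    (α ε : ℝ) (hε0 : 0 < ε) (hεα : ε < α)
    (c : EuclideanSpace ℝ (Fin d))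
    (hcenter : ∀ (f : EuclideanSpace ℝ (Fin d) →L[ℝ] ℝ) (a : ℝ), f ≠ 0 →
      a ≤ f c → (⌈α * P.card⌉ : ℤ) ≤ (P.filter (fun p => a ≤ f p)).card)
    (P' : Finset (EuclideanSpace ℝ (Fin d)))
    (hcard : ((P' ∩ P).card : ℝ) > (1 - ε) * P.card) :
    ∀ y ∈ P', dist c y ≤ Metric.diam (P' : Set (EuclideanSpace ℝ (Fin d))) :=
  stmt_8_general P hP α ε hεα c hcenter P' hcard
end

section
/- Let P ⊆ ℝ^d be finite, c ∈ conv(P), and B the ball centered at c with radius F(c,P) = max_{p∈P} dist(c,p). Then B encloses P, and any ball enclosing P has radius at least F(c,P)/2. -/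
theorem stmt_9 {d : ℕ} (P : Finset (EuclideanSpace ℝ (Fin d))) (hP : P.Nonempty)
    (c : EuclideanSpace ℝ (Fin d))
    (hc : c ∈ convexHull ℝ (P : Set (EuclideanSpace ℝ (Fin d)))) :
    (∀ p ∈ P, p ∈ Metric.closedBall c (P.sup' hP (fun q => dist c q))) ∧
    (∀ (z : EuclideanSpace ℝ (Fin d)) (r : ℝ),
      (∀ p ∈ P, dist z p ≤ r) → P.sup' hP (fun q => dist c q) / 2 ≤ r) := by
  constructor
  · intro p hp
    rw [Metric.mem_closedBall, dist_comm]
    exact Finset.le_sup' _ hp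
  · intro z r hz
    obtain ⟨p, hp, hpmax⟩ := Finset.exists_mem_eq_sup' hP (fun q => dist c q)
    obtain ⟨q, hq, hcq⟩ := convexHull_exists_dist_ge hc p
    have h1 : dist q p ≤ dist z q + dist z p := dist_triangle_left q p z
    have := hz q hq
    have := hz p hp
    rw [hpmax]
    linarith
end
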